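/- arXiv:1306.5973 — 4 statements merged into one kernel-verified Lean document; each statement's English description precedes it below -/
import Mathlib

section
/- Cauchy's singular-integral (Dirac delta) limit: for a continuous function F : ℝ → ℝ, any a ∈ ℝ and fixed ε > 0, the limit as α → 0⁺ of (1/2)·∫_{a-ε}^{a+ε} F(μ)·α/(α² + (μ−a)²) dμ equals (π/2)·F(a). -/
open Real Filter intervalIntegral MeasureTheory

theorem stmt_14 (F : ℝ → ℝ) (hF : Continuous F) (a ε : ℝ) (hε : 0 < ε) :
    Tendsto (fun α : ℝ =>
        (1 / 2) * ∫ μ in (a - ε)..(a + ε), F μ * α / (α ^ 2 + (μ - a) ^ 2))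
      (nhdsWithin 0 (Set.Ioi 0)) (nhds (π / 2 * F a)) := by
  obtain ⟨M, hM⟩ := isCompact_Icc.exists_bound_of_continuousOn
    (s := Set.Icc (a - ε) (a + ε)) hF.continuousOn
  have haI : a ∈ Set.Icc (a - ε) (a + ε) := by
    constructor <;> linarith
  have hM0 : 0 ≤ M := le_trans (norm_nonneg _) (hM a haI)
  set G : ℝ → ℝ → ℝ := fun α t =>
    Set.indicator (Set.Ioc (-(ε / α)) (ε / α)) (fun t => F (a + α * t) / (1 + t ^ 2)) t with hG
  -- dominated convergence
  have key : Tendsto (fun α => ∫ t, G α t) (nhdsWithin 0 (Set.Ioi 0))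
      (nhds (∫ t : ℝ, F a / (1 + t ^ 2))) := by
    apply MeasureTheory.tendsto_integral_filter_of_dominated_convergence
      (fun t : ℝ => M * (1 + t ^ 2)⁻¹)
    · filter_upwards with α
      exact (((hF.comp (by continuity)).div (by continuity)
        (fun t => by positivity)).aestronglyMeasurable).indicator measurableSet_Ioc
    · filter_upwards [self_mem_nhdsWithin] with α (hα : (0:ℝ) < α)
      filter_upwards with t
      by_cases ht : t ∈ Set.Ioc (-(ε / α)) (ε / α)
      · simp only [hG, Set.indicator_of_mem ht]
        have h1t : (0:ℝ) < 1 + t ^ 2 := by positivity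
        have hmem : a + α * t ∈ Set.Icc (a - ε) (a + ε) := by
          obtain ⟨hl, hr⟩ := ht
          have hr' : α * t ≤ ε := by
            rw [mul_comm]; exact (le_div_iff₀ hα).mp hr
          have hl' : -ε ≤ α * t := by
            have h := neg_lt.mpr hl
            have := (lt_div_iff₀ hα).mp h
            nlinarith
          constructor <;> linarith
        have hb := hM _ hmem
        rw [norm_div, Real.norm_eq_abs (1 + t ^ 2), abs_of_pos h1t, div_eq_mul_inv]
        exact mul_le_mul_of_nonneg_right hb (by positivity)
      · simp only [hG, Set.indicator_of_notMem ht, norm_zero]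
        positivity
    · exact integrable_inv_one_add_sq.const_mul M
    · filter_upwards with t
      have hev : ∀ᶠ α in nhdsWithin (0:ℝ) (Set.Ioi 0),
          G α t = F (a + α * t) / (1 + t ^ 2) := by
        have hc : (0:ℝ) < ε / (|t| + 1) := by positivity
        filter_upwards [Ioo_mem_nhdsGT_of_mem (Set.mem_Ico.mpr ⟨le_refl 0, hc⟩)]
          with α hα
        obtain ⟨hα0, hαc⟩ := hα
        have hαt : α * |t| < ε := by
          have := (lt_div_iff₀ (by positivity : (0:ℝ) < |t| + 1)).mp hαc
          nlinarith [abs_nonneg t]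
        have ht1 : t ≤ ε / α := by
          rw [le_div_iff₀ hα0]
          nlinarith [le_abs_self t]
        have ht2 : -(ε / α) < t := by
          rw [neg_lt, lt_div_iff₀ hα0]
          nlinarith [neg_le_abs t]
        simp only [hG, Set.indicator_of_mem (Set.mem_Ioc.mpr ⟨ht2, ht1⟩)]
      rw [tendsto_congr' hev]
      have hcont : Continuous fun α : ℝ => F (a + α * t) / (1 + t ^ 2) :=
        (hF.comp (by continuity)).div_const _
      have h0 := hcont.tendsto 0
      simp only [zero_mul, add_zero] at h0
      exact h0.mono_left nhdsWithin_le_nhds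
  -- identify the integrals for α > 0
  have heq : ∀ᶠ α in nhdsWithin (0:ℝ) (Set.Ioi 0),
      (1 / 2) * ∫ μ in (a - ε)..(a + ε), F μ * α / (α ^ 2 + (μ - a) ^ 2)
        = (1 / 2) * ∫ t, G α t := by
    filter_upwards [self_mem_nhdsWithin] with α (hα : (0:ℝ) < α)
    congr 1
    have heq1 : (∫ μ in (a - ε)..(a + ε), F μ * α / (α ^ 2 + (μ - a) ^ 2))
        = ∫ x in (-ε)..ε, F (x + a) * α / (α ^ 2 + x ^ 2) := by
      rw [show (a - ε) = -ε + a by ring, show (a + ε) = ε + a by ring,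
        ← intervalIntegral.integral_comp_add_right (fun μ => F μ * α / (α ^ 2 + (μ - a) ^ 2)) a]
      simp only [add_sub_cancel_right]
    have heq2 : (∫ t in (-(ε / α))..(ε / α), F (a + α * t) / (1 + t ^ 2))
        = ∫ x in (-ε)..ε, F (x + a) * α / (α ^ 2 + x ^ 2) := by
      have h := intervalIntegral.integral_comp_mul_left
        (fun x => F (x + a) * α / (α ^ 2 + x ^ 2)) hα.ne'
        (a := -(ε / α)) (b := ε / α)
      rw [mul_neg, mul_div_cancel₀ ε hα.ne'] at h
      have h' : (∫ t in (-(ε / α))..(ε / α), F (a + α * t) / (1 + t ^ 2))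
          = α • ∫ t in (-(ε / α))..(ε / α),
              (fun x => F (x + a) * α / (α ^ 2 + x ^ 2)) (α * t) := by
        rw [← intervalIntegral.integral_smul]
        apply intervalIntegral.integral_congr
        intro t _
        have h1t : (0:ℝ) < 1 + t ^ 2 := by positivity
        have hd : α ^ 2 + (α * t) ^ 2 = α ^ 2 * (1 + t ^ 2) := by ring
        simp only [smul_eq_mul, hd]
        rw [add_comm a (α * t)]
        field_simp
      rw [h', h, smul_smul, mul_inv_cancel₀ hα.ne', one_smul]
    have heq3 : (∫ t, G α t) = ∫ t in (-(ε / α))..(ε / α), F (a + α * t) / (1 + t ^ 2) := by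
      rw [intervalIntegral.integral_of_le (by
        have : 0 < ε / α := by positivity
        linarith)]
      simp only [hG]
      rw [MeasureTheory.integral_indicator measurableSet_Ioc]
    rw [heq3, heq2, heq1]
  rw [tendsto_congr' heq]
  have hlim : (∫ t : ℝ, F a / (1 + t ^ 2)) = F a * π := by
    simp_rw [div_eq_mul_inv]
    rw [MeasureTheory.integral_const_mul, integral_univ_inv_one_add_sq]
  have hpf : π / 2 * F a = 1 / 2 * (F a * π) := by ring
  rw [hpf, ← hlim]
  exact tendsto_const_nhds.mul key
end

section
/- Euler's product for hyperbolic sine: for every real x, sinh x = x · ∏_{k=1}^{∞} (1 + x²/(k²π²)). -/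
open Real Filter

theorem stmt_17 (x : ℝ) :
    Tendsto (fun n : ℕ =>
        x * ∏ k ∈ Finset.range n, (1 + x ^ 2 / (((k : ℝ) + 1) ^ 2 * π ^ 2)))
      atTop (nhds (sinh x)) := by
  have hpi : (π : ℂ) ≠ 0 := by exact_mod_cast Real.pi_ne_zero
  have h := Complex.tendsto_euler_sin_prod (x * Complex.I / π)
  have hz : (π : ℂ) * (x * Complex.I / π) = x * Complex.I := by
    field_simp
  rw [hz, Complex.sin_mul_I] at h
  convert (Complex.continuous_im.tendsto _).comp h using 1
  · ext n
    rw [Function.comp_apply]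
    have hprod : (∏ j ∈ Finset.range n, ((1 : ℂ) - (↑x * Complex.I / ↑π) ^ 2 / ((j : ℂ) + 1) ^ 2))
        = ((∏ k ∈ Finset.range n, (1 + x ^ 2 / (((k : ℝ) + 1) ^ 2 * π ^ 2)) : ℝ) : ℂ) := by
      rw [Complex.ofReal_prod]
      refine Finset.prod_congr rfl fun j _ => ?_
      have hj : ((j : ℂ) + 1) ≠ 0 := Nat.cast_add_one_ne_zero j
      push_cast
      field_simp [Complex.I_sq]
      ring_nf
      simp [Complex.I_sq]
    rw [hprod, show ((x:ℂ) * Complex.I * ((∏ k ∈ Finset.range n,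
        (1 + x ^ 2 / (((k : ℝ) + 1) ^ 2 * π ^ 2)) : ℝ) : ℂ)) =
      ((x * ∏ k ∈ Finset.range n, (1 + x ^ 2 / (((k : ℝ) + 1) ^ 2 * π ^ 2)) : ℝ) : ℂ) * Complex.I
      by push_cast; ring]
    rw [Complex.mul_I_im, Complex.ofReal_re]
  · rw [Complex.mul_im, Complex.I_im, Complex.I_re, Complex.sinh_ofReal_im,
      Complex.sinh_ofReal_re]
    ring
end

section
/- For every real x, if H is an infinite hypernatural, then (1 + x/H)^H is a finite hyperreal infinitely close to e^x, i.e., st((1 + x/H)^H) = exp x. -/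
open Hyperreal

theorem stmt_18 (x : ℝ) (N : ℕ → ℕ)
    (hN : InfinitePos (ofSeq fun n => (N n : ℝ))) :
    IsSt (ofSeq fun n => (1 + x / (N n : ℝ)) ^ (N n)) (Real.exp x) := by
  rw [isSt_ofSeq_iff_tendsto]
  have hNt : Filter.Tendsto N (Filter.hyperfilter ℕ) Filter.atTop := by
    rw [Filter.tendsto_atTop]
    intro M
    have h : ofSeq (fun _ => (M : ℝ)) < ofSeq fun n => (N n : ℝ) := hN (M : ℝ)
    filter_upwards [ofSeq_lt_ofSeq.1 h] with n hn
    exact_mod_cast hn.le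
  exact (Real.tendsto_one_add_div_pow_exp x).comp hNt
end

section
/- Euclid's V.4 does not imply Archimedes' lemma in ordered semigroups: the set of positive appreciable limited hyperreals (positive finite hyperreals that are not infinitesimal), as an additive ordered semigroup, satisfies Euclid's definition V.4 (for all a, b there exists n ∈ ℕ with n·a > b) but fails Archimedes' lemma (there exist a < b and c such that for all n ∈ ℕ, n·(b − a) ≤ c). -/
open Hyperreal

/-- The positive appreciable limited hyperreals. -/
def Appreciable : Set ℝ* :=
  {x : ℝ* | 0 < x ∧ ¬ x.Infinite ∧ ¬ Infinitesimal x}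

theorem stmt_19 :
    (∀ a ∈ Appreciable, ∀ b ∈ Appreciable, ∃ n : ℕ, b < (n : ℝ*) * a) ∧
    (∃ a ∈ Appreciable, ∃ b ∈ Appreciable, a < b ∧
      ∃ c ∈ Appreciable, ∀ n : ℕ, (n : ℝ*) * (b - a) ≤ c) := by
  constructor
  · rintro a ⟨ha0, _, hai⟩ b ⟨_, hbI, _⟩
    -- get real lower bound r ≤ a with r > 0
    rw [infinitesimal_def] at hai
    push_neg at hai
    obtain ⟨r, hr0, hra⟩ := hai
    have hra' : (r : ℝ*) ≤ a := by
      rcases hra (by exact_mod_cast lt_trans (by exact_mod_cast neg_neg_of_pos hr0 : -(r:ℝ*) < 0) ha0) with h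
      exact h
    obtain ⟨_, s, _, hbs⟩ := not_infinite_iff_exist_lt_gt.mp hbI
    obtain ⟨n, hn⟩ := exists_nat_gt (s / r)
    refine ⟨n, lt_of_lt_of_le (lt_trans hbs (show (s:ℝ*) < (n:ℝ*)*(r:ℝ*) from ?_)) ?_⟩
    · rw [show ((n:ℝ*)) = ((n:ℝ):ℝ*) by norm_cast, ← coe_mul, coe_lt_coe]
      exact (div_lt_iff₀ hr0).mp hn
    · exact mul_le_mul_of_nonneg_left hra' (by positivity)
  · refine ⟨1, ⟨one_pos, not_infinite_real 1, fun h => by simpa using lt_of_pos_of_infinitesimal h 1 one_pos⟩,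
      1 + ε, ⟨by linarith [epsilon_pos], ?_, ?_⟩,
      lt_add_of_pos_right 1 epsilon_pos,
      1, ⟨one_pos, not_infinite_real 1, fun h => by simpa using lt_of_pos_of_infinitesimal h 1 one_pos⟩, ?_⟩
    · exact not_infinite_add (not_infinite_real 1) infinitesimal_epsilon.not_infinite
    · intro h
      have h1 := (infinitesimal_def.mp h 1 one_pos).2
      rw [coe_one] at h1
      linarith [epsilon_pos]
    · intro n
      simp only [add_sub_cancel_left]
      cases n with
      | zero => simp
      | succ m =>
        have hpos : (0:ℝ) < 1 / (m + 1) := by positivity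
        have h1 : ε < ((1 / (m + 1) : ℝ) : ℝ*) := epsilon_lt_pos hpos
        have h2 : ((m + 1 : ℕ) : ℝ*) * ε < ((m + 1 : ℕ) : ℝ*) * ((1 / (m + 1) : ℝ) : ℝ*) :=
          mul_lt_mul_of_pos_left h1 (by positivity)
        have h3 : ((m + 1 : ℕ) : ℝ*) * ((1 / (m + 1) : ℝ) : ℝ*) = 1 := by
          rw [show ((m + 1 : ℕ) : ℝ*) = (((m+1:ℝ)) : ℝ*) by norm_cast, ← coe_mul,
            mul_one_div, div_self (by positivity), coe_one]
        calc ((m + 1 : ℕ) : ℝ*) * ε ≤ 1 := by rw [← h3]; exact h2.le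
end
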